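/- Let C be a pointed, spanning polyhedral cone in E = ℝⁿ, let D ⊆ E be a downset, and let σ be a face of C. Then {a ∈ E | a − σ° ⊆ D} = ⋃_{x ∈ E} closure(D ∩ (x + span_ℝ σ)), where span_ℝ σ is the linear span of σ and the closure is the topological closure in E. -/

import Mathlib

/-! A face `σ` of a cone is itself a cone, so `σ°` is invariant under positive scaling. Hence for
`a ∈ D^σ` and `s₀ ∈ σ°` the points `a - t • s₀ ∈ D` tend to `a` inside `a + span σ` as `t → 0⁺`.
Conversely, let `a` be a limit of points of `D ∩ (x + span σ)` and `s ∈ σ°`. Since `σ°` is open in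
`span σ`, a point `d ∈ D ∩ (x + span σ)` close enough to `a` gives `s + (d - a) ∈ σ ⊆ C`,
i.e. `a - s ≼ d`, so `a - s ∈ D`. -/

open Pointwise

/-- A polyhedral cone in `ℝⁿ`: an intersection of finitely many closed linear half-spaces. -/
def IsPolyCone {n : ℕ} (C : Set (Fin n → ℝ)) : Prop :=
  ∃ (m : ℕ) (ℓ : Fin m → ((Fin n → ℝ) →ₗ[ℝ] ℝ)), C = {x | ∀ i, 0 ≤ ℓ i x}

/-- A face of a cone `C`: a subset of `C` containing `0`, closed under addition, and such
that whenever `x, y ∈ C` and `x + y` lies in the subset, both `x` and `y` do. -/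
def IsConeFace {M : Type*} [AddCommMonoid M] (σ C : Set M) : Prop :=
  σ ⊆ C ∧ (0 : M) ∈ σ ∧ (∀ x ∈ σ, ∀ y ∈ σ, x + y ∈ σ) ∧
    ∀ x ∈ C, ∀ y ∈ C, x + y ∈ σ → x ∈ σ ∧ y ∈ σ

/-- A downset for the partial order `x ≼ y ↔ y - x ∈ C`. -/
def IsDownset {n : ℕ} (C D : Set (Fin n → ℝ)) : Prop :=
  ∀ x y : Fin n → ℝ, y ∈ D → y - x ∈ C → x ∈ D

/-- The upper boundary downset `D^σ = {a | a - σ° ⊆ D}`. -/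
def upSet {n : ℕ} (D σ : Set (Fin n → ℝ)) : Set (Fin n → ℝ) :=
  {a | ∀ s ∈ intrinsicInterior ℝ σ, a - s ∈ D}

/-- `a` is a cogenerator of the downset `D` along the face `τ` with nadir `σ`:
`(a + C) ∩ D^σ = a + τ` and no face `σ''` with `τ ⊆ σ'' ⊊ σ` satisfies `a - σ''° ⊆ D`. -/
def IsCogen {n : ℕ} (C D τ σ : Set (Fin n → ℝ)) (a : Fin n → ℝ) : Prop :=
  (({a} + C) ∩ upSet D σ = {a} + τ) ∧
  ∀ σ'' : Set (Fin n → ℝ), IsConeFace σ'' C → τ ⊆ σ'' → σ'' ⊂ σ →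
    ¬ (∀ s ∈ intrinsicInterior ℝ σ'', a - s ∈ D)

/-- A `σ`-vicinity of a point `p` of `E ⧸ span τ`: the image under the quotient map of
`u + σ° + C` for some `u` admitting a representative `w` of `p` with `w - u ∈ σ°`. -/
def IsVic {n : ℕ} (C σ τ : Set (Fin n → ℝ))
    (p : (Fin n → ℝ) ⧸ Submodule.span ℝ τ)
    (V : Set ((Fin n → ℝ) ⧸ Submodule.span ℝ τ)) : Prop :=
  ∃ u w : Fin n → ℝ, (Submodule.span ℝ τ).mkQ w = p ∧
    w - u ∈ intrinsicInterior ℝ σ ∧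
    V = (Submodule.span ℝ τ).mkQ '' ({u} + intrinsicInterior ℝ σ + C)

theorem IsPolyCone.smul_mem {n : ℕ} {C : Set (Fin n → ℝ)} (hC : IsPolyCone C) :
    ∀ ⦃t : ℝ⦄, 0 ≤ t → ∀ ⦃x⦄, x ∈ C → t • x ∈ C := by
  obtain ⟨m, ℓ, rfl⟩ := hC
  intro t ht x hx i
  simpa only [map_smul, smul_eq_mul] using mul_nonneg ht (hx i)

theorem Submodule.mem_singleton_add_iff {R E : Type*} [Ring R] [AddCommGroup E] [Module R E]
    {L : Submodule R E} {x y : E} : y ∈ {x} + (L : Set E) ↔ y - x ∈ L := by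
  rw [Set.singleton_add]
  constructor
  · rintro ⟨v, hv, rfl⟩
    simpa using hv
  · exact fun h ↦ ⟨y - x, h, add_sub_cancel x y⟩

theorem Submodule.isClosed_singleton_add {E : Type*} [NormedAddCommGroup E] [NormedSpace ℝ E]
    (L : Submodule ℝ E) [FiniteDimensional ℝ L] (x : E) : IsClosed ({x} + (L : Set E)) := by
  have : {x} + (L : Set E) = (· - x) ⁻¹' L := Set.ext fun _ ↦ Submodule.mem_singleton_add_iff
  exact this ▸ L.closed_of_finiteDimensional.preimage (continuous_sub_right x)

theorem span_le_vectorSpan_of_zero_mem {E : Type*} [AddCommGroup E] [Module ℝ E] {σ : Set E}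
    (h0 : (0 : E) ∈ σ) : Submodule.span ℝ σ ≤ vectorSpan ℝ σ :=
  Submodule.span_le.2 fun x hx ↦ by simpa using vsub_mem_vectorSpan ℝ hx h0

theorem intrinsicInterior_smul {E : Type*} [AddCommGroup E] [Module ℝ E] [TopologicalSpace E]
    [IsTopologicalAddGroup E] [ContinuousSMul ℝ E] {t : ℝ} (ht : t ≠ 0) (s : Set E) :
    intrinsicInterior ℝ (t • s) = t • intrinsicInterior ℝ s := by
  let e : E ≃ᴬ[ℝ] E :=
    (ContinuousLinearEquiv.smulLeft (R₁ := ℝ) (Units.mk0 t ht)).toContinuousAffineEquiv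
  have he : ⇑e = (t • ·) := rfl
  simpa only [he, Set.image_smul] using e.intrinsicInterior_image s

theorem exists_add_mem_of_mem_intrinsicInterior {E : Type*} [NormedAddCommGroup E]
    [NormedSpace ℝ E] {σ : Set E} {s : E} (hs : s ∈ intrinsicInterior ℝ σ) :
    ∃ ε > 0, ∀ v ∈ vectorSpan ℝ σ, ‖v‖ < ε → s + v ∈ σ := by
  obtain ⟨p, hp, rfl⟩ := hs
  obtain ⟨ε, hε, hball⟩ := Metric.mem_nhds_iff.1 (mem_interior_iff_mem_nhds.1 hp)
  refine ⟨ε, hε, fun v hv hvε ↦ ?_⟩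
  have hmem : v + (p : E) ∈ affineSpan ℝ σ :=
    AffineSubspace.vadd_mem_of_mem_direction (by rwa [direction_affineSpan]) p.2
  rw [add_comm]
  exact hball (show (⟨v + p, hmem⟩ : affineSpan ℝ σ) ∈ Metric.ball p ε by
    simpa [Subtype.dist_eq, dist_eq_norm] using hvε)

namespace IsConeFace

theorem nsmul_mem {M : Type*} [AddCommMonoid M] {σ C : Set M} (hσ : IsConeFace σ C) (k : ℕ)
    {x : M} (hx : x ∈ σ) : k • x ∈ σ := by
  induction k with
  | zero => simpa using hσ.2.1
  | succ k ih => simpa [succ_nsmul] using hσ.2.2.1 _ ih _ hx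

section Module

variable {E : Type*} [AddCommGroup E] [Module ℝ E] {σ C : Set E}

-- `t • x` and `(⌈t⌉₊ - t) • x` lie in `C` and add up to `⌈t⌉₊ • x ∈ σ`.
theorem smul_mem (hC : ∀ ⦃t : ℝ⦄, 0 ≤ t → ∀ ⦃x⦄, x ∈ C → t • x ∈ C) (hσ : IsConeFace σ C)
    {t : ℝ} (ht : 0 ≤ t) {x : E} (hx : x ∈ σ) : t • x ∈ σ := by
  have hxC := hσ.1 hx
  have hsum : t • x + (⌈t⌉₊ - t) • x ∈ σ := by
    rw [← add_smul, add_sub_cancel, Nat.cast_smul_eq_nsmul]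
    exact hσ.nsmul_mem _ hx
  exact (hσ.2.2.2 _ (hC ht hxC) _ (hC (sub_nonneg.2 (Nat.le_ceil t)) hxC) hsum).1

theorem convex (hC : ∀ ⦃t : ℝ⦄, 0 ≤ t → ∀ ⦃x⦄, x ∈ C → t • x ∈ C) (hσ : IsConeFace σ C) :
    Convex ℝ σ := fun _ hx _ hy _ _ ha hb _ ↦
  hσ.2.2.1 _ (hσ.smul_mem hC ha hx) _ (hσ.smul_mem hC hb hy)

theorem smul_eq (hC : ∀ ⦃t : ℝ⦄, 0 ≤ t → ∀ ⦃x⦄, x ∈ C → t • x ∈ C) (hσ : IsConeFace σ C)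
    {t : ℝ} (ht : 0 < t) : t • σ = σ := by
  refine (Set.smul_set_subset_iff.2 fun x hx ↦ hσ.smul_mem hC ht.le hx).antisymm fun x hx ↦ ?_
  exact ⟨t⁻¹ • x, hσ.smul_mem hC (inv_nonneg.2 ht.le) hx, smul_inv_smul₀ ht.ne' x⟩

theorem smul_mem_intrinsicInterior [TopologicalSpace E] [IsTopologicalAddGroup E]
    [ContinuousSMul ℝ E] (hC : ∀ ⦃t : ℝ⦄, 0 ≤ t → ∀ ⦃x⦄, x ∈ C → t • x ∈ C) (hσ : IsConeFace σ C)
    {t : ℝ} (ht : 0 < t) {s : E} (hs : s ∈ intrinsicInterior ℝ σ) :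
    t • s ∈ intrinsicInterior ℝ σ := by
  rw [← hσ.smul_eq hC ht, intrinsicInterior_smul ht.ne']
  exact Set.smul_mem_smul_set hs

end Module

end IsConeFace

section UpSet

variable {n : ℕ} {C D σ : Set (Fin n → ℝ)} {a : Fin n → ℝ}

theorem mem_closure_inter_of_mem_upSet (hC : IsPolyCone C) (hσ : IsConeFace σ C)
    (ha : a ∈ upSet D σ) :
    a ∈ closure (D ∩ ({a} + (Submodule.span ℝ σ : Set (Fin n → ℝ)))) := by
  obtain ⟨s₀, hs₀⟩ := Set.Nonempty.intrinsicInterior (hσ.convex hC.smul_mem) ⟨0, hσ.2.1⟩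
  have hlim : Filter.Tendsto (fun t : ℝ ↦ a - t • s₀) (nhdsWithin 0 (Set.Ioi 0)) (nhds a) := by
    have : Continuous fun t : ℝ ↦ a - t • s₀ := by fun_prop
    simpa using (this.tendsto 0).mono_left nhdsWithin_le_nhds
  refine mem_closure_of_tendsto hlim (Filter.eventually_of_mem self_mem_nhdsWithin fun t ht ↦ ?_)
  refine ⟨ha _ (hσ.smul_mem_intrinsicInterior hC.smul_mem ht hs₀),
    Submodule.mem_singleton_add_iff.2 ?_⟩
  simpa using Submodule.smul_mem _ t (Submodule.subset_span (intrinsicInterior_subset hs₀))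

theorem mem_upSet_of_mem_closure_inter (hD : IsDownset C D) (hσC : σ ⊆ C)
    (h0 : (0 : Fin n → ℝ) ∈ σ) {x : Fin n → ℝ} (ha : a ∈ closure (D ∩ ({x} + (Submodule.span ℝ σ : Set (Fin n → ℝ))))) :
    a ∈ upSet D σ := by
  have haL : a - x ∈ Submodule.span ℝ σ :=
    Submodule.mem_singleton_add_iff.1 <| closure_minimal Set.inter_subset_right
      ((Submodule.span ℝ σ).isClosed_singleton_add x) ha
  intro s hs
  obtain ⟨ε, hε, hball⟩ := exists_add_mem_of_mem_intrinsicInterior hs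
  obtain ⟨d, ⟨hdD, hdL⟩, hda⟩ := Metric.mem_closure_iff.1 ha ε hε
  have hdaL : d - a ∈ Submodule.span ℝ σ := by
    simpa using Submodule.sub_mem _ (Submodule.mem_singleton_add_iff.1 hdL) haL
  have hsd : s + (d - a) ∈ σ :=
    hball _ (span_le_vectorSpan_of_zero_mem h0 hdaL) (by rwa [← dist_eq_norm, dist_comm])
  refine hD _ _ hdD ?_
  rw [show d - (a - s) = s + (d - a) by abel]
  exact hσC hsd

end UpSet

theorem upSet_eq_union_closures_general {n : ℕ} (C D σ : Set (Fin n → ℝ))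
    (hC : IsPolyCone C) (hD : IsDownset C D) (hσ : IsConeFace σ C) :
    upSet D σ =
      ⋃ x : Fin n → ℝ,
        closure (D ∩ ({x} + (Submodule.span ℝ σ : Set (Fin n → ℝ)))) := by
  ext a
  refine ⟨fun ha ↦ Set.mem_iUnion.2 ⟨a, mem_closure_inter_of_mem_upSet hC hσ ha⟩, fun ha ↦ ?_⟩
  obtain ⟨x, hx⟩ := Set.mem_iUnion.1 ha
  exact mem_upSet_of_mem_closure_inter hD hσ.1 hσ.2.1 hx

/-- `{a | a - σ° ⊆ D}` is the union over `x ∈ E` of the closures of the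
slices `D ∩ (x + span σ)`. -/
theorem upSet_eq_union_closures {n : ℕ} (C D σ : Set (Fin n → ℝ))
    (hC : IsPolyCone C) (hpointed : C ∩ (-C) = {0}) (hspan : C - C = Set.univ)
    (hD : IsDownset C D) (hσ : IsConeFace σ C) :
    upSet D σ =
      ⋃ x : Fin n → ℝ,
        closure (D ∩ ({x} + (Submodule.span ℝ σ : Set (Fin n → ℝ)))) :=
  upSet_eq_union_closures_general C D σ hC hD hσ
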